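/- For every dimension d ≥ 1, every p ∈ (1,∞) with Hölder conjugate q = p/(p−1), every α > 0 and every ε > 0, the heat kernel satisfies the exact identity ‖Φ_ε‖_{𝒮𝒲^{−α,p}} = ε^{(α − d/q)/2} · (4π)^{−d/2} · 𝒮𝓑₀(ε, α, p, d)^{1/p}, where 𝒮𝓑₀(ε, α, p, d) = ∫_{ℝ^d} (∫₀^{1/ε} s^{α−1} (1+s)^{−d} exp(−|y|²/(2(1+s))) ds)^{p/2} dy. -/

import Mathlib

open MeasureTheory ProbabilityTheory Real Filter
open scoped ENNReal Topology Classical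

noncomputable section

abbrev Esp (d : ℕ) := EuclideanSpace ℝ (Fin d)

/-- The heat kernel on `ℝ^d`. -/
def heatK (d : ℕ) (t : ℝ) (x : Esp d) : ℝ :=
  (4 * π * t) ^ (-(d : ℝ) / 2) * Real.exp (-‖x‖ ^ 2 / (4 * t))

/-- The `𝒮𝒲^{-α,p}` norm, applied to the heat evolution `u t = distribution * Φ_t`. -/
def scrWNorm (d : ℕ) (α p : ℝ) (u : ℝ → Esp d → ℝ) : ℝ≥0∞ :=
  (∫⁻ x : Esp d, (∫⁻ t in Set.Ioc (0:ℝ) 1, ENNReal.ofReal (t ^ (α - 1)) *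
      ENNReal.ofReal ((u t x) ^ 2)) ^ ((p : ℝ) / 2)) ^ (1 / p)

/-- Heat evolution of `Φ_ε` (of `δ₀` when `ε = 0`): `Φ_ε * Φ_t = Φ_{t+ε}`. -/
def phiEvol (d : ℕ) (ε : ℝ) : ℝ → Esp d → ℝ := fun t x => heatK d (t + ε) x

/-!
The heat kernel is invariant under parabolic scaling, `Φ_{ε(1+s)}(√ε y) = ε^{-d/2} Φ_{1+s}(y)`.
Substituting `t = ε s` in the time integral and `x = √ε y` in the space integral therefore turns
the `𝒮𝒲^{-α,p}` norm of `Φ_ε` into an explicit power of `ε` times the integral `𝒮𝓑₀` of the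
profile. Since `𝒮𝓑₀` is a Bochner integral (which would be `0` if it diverged), one must also
show that it is finite: the time integral converges because `α > 0`, and it decays like a
Gaussian in `y`.
-/

theorem lintegral_eq_ofReal_pow_mul_lintegral_comp_smul {E : Type*} [NormedAddCommGroup E]
    [NormedSpace ℝ E] [MeasurableSpace E] [BorelSpace E] [FiniteDimensional ℝ E]
    (μ : Measure E) [μ.IsAddHaarMeasure] (f : E → ℝ≥0∞) {R : ℝ} (hR : 0 < R) :
    ∫⁻ x, f x ∂μ = ENNReal.ofReal (R ^ Module.finrank ℝ E) * ∫⁻ x, f (R • x) ∂μ := by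
  have hRn : 0 < R ^ Module.finrank ℝ E := pow_pos hR _
  have hmap : ∫⁻ x, f (R • x) ∂μ = ∫⁻ x, f x ∂(μ.map (R • ·)) :=
    (lintegral_map_equiv f (MeasurableEquiv.smul₀ R hR.ne')).symm
  rw [hmap, Measure.map_addHaar_smul μ hR.ne', lintegral_smul_measure, smul_eq_mul, ← mul_assoc,
    abs_of_pos (inv_pos.2 hRn), ← ENNReal.ofReal_mul hRn.le, mul_inv_cancel₀ hRn.ne',
    ENNReal.ofReal_one, one_mul]

theorem setLIntegral_Ioc_zero_eq_mul_comp_mul (f : ℝ → ℝ≥0∞) {b c : ℝ} (hc : 0 < c) :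
    ∫⁻ t in Set.Ioc 0 b, f t = ENNReal.ofReal c * ∫⁻ s in Set.Ioc 0 (b / c), f (c * s) := by
  rw [← lintegral_indicator measurableSet_Ioc, ← lintegral_indicator measurableSet_Ioc,
    lintegral_eq_ofReal_pow_mul_lintegral_comp_smul volume _ hc, Module.finrank_self, pow_one]
  congr 1
  refine lintegral_congr fun s => ?_
  rw [smul_eq_mul, ← Set.indicator_comp_right (fun s => c * s) (g := f),
    Set.preimage_const_mul_Ioc₀ 0 b hc, zero_div]
  rfl

theorem integrable_exp_neg_mul_sq_norm {V : Type*} [NormedAddCommGroup V] [InnerProductSpace ℝ V]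
    [FiniteDimensional ℝ V] [MeasurableSpace V] [BorelSpace V] {b : ℝ} (hb : 0 < b) :
    Integrable (fun v : V => Real.exp (-b * ‖v‖ ^ 2)) := by
  have h := GaussianFourier.integrable_cexp_neg_mul_sq_norm_add (V := V) (b := (b : ℂ))
    (by simpa using hb) 0 0
  refine h.re.congr (Eventually.of_forall fun v => ?_)
  simp only [zero_mul, add_zero, ← Complex.ofReal_pow, ← Complex.ofReal_neg, ← Complex.ofReal_mul,
    ← Complex.ofReal_exp, RCLike.re_to_complex, Complex.ofReal_re]

theorem integrableOn_rpow_Ioc_zero {r : ℝ} (hr : -1 < r) (b : ℝ) :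
    IntegrableOn (fun s : ℝ => s ^ r) (Set.Ioc 0 b) :=
  (intervalIntegral.intervalIntegrable_rpow' hr).def'.mono_set Set.Ioc_subset_uIoc

theorem heatK_mul_smul_sqrt (d : ℕ) {c t : ℝ} (hc : 0 < c) (ht : 0 ≤ t) (x : Esp d) :
    heatK d (c * t) (√c • x) = c ^ (-(d : ℝ) / 2) * heatK d t x := by
  have hnorm : ‖√c • x‖ ^ 2 = c * ‖x‖ ^ 2 := by
    rw [norm_smul, mul_pow, Real.norm_eq_abs, sq_abs, Real.sq_sqrt hc.le]
  unfold heatK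
  rw [hnorm, show 4 * π * (c * t) = c * (4 * π * t) by ring,
    Real.mul_rpow hc.le (by positivity), mul_assoc]
  congr 3
  field_simp

theorem heatK_sq (d : ℕ) {t : ℝ} (ht : 0 ≤ t) (x : Esp d) :
    heatK d t x ^ 2 = (4 * π) ^ (-(d : ℝ)) * t ^ (-(d : ℝ)) * Real.exp (-‖x‖ ^ 2 / (2 * t)) := by
  have hexp : -(d : ℝ) / 2 * (2 : ℕ) = -d := by push_cast; ring
  have harg : ((2 : ℕ) : ℝ) * (-‖x‖ ^ 2 / (4 * t)) = -‖x‖ ^ 2 / (2 * t) := by push_cast; ring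
  unfold heatK
  rw [mul_pow, ← Real.rpow_mul_natCast (by positivity), ← Real.exp_nat_mul, hexp, harg,
    Real.mul_rpow (by positivity) ht]

def heatProfile (d : ℕ) (α : ℝ) (y : Esp d) (s : ℝ) : ℝ :=
  s ^ (α - 1) * (1 + s) ^ (-(d : ℝ)) * Real.exp (-‖y‖ ^ 2 / (2 * (1 + s)))

theorem heatProfile_nonneg (d : ℕ) (α : ℝ) (y : Esp d) {s : ℝ} (hs : 0 ≤ s) :
    0 ≤ heatProfile d α y s := by
  unfold heatProfile
  positivity

theorem rpow_mul_phiEvol_sq_smul_sqrt (d : ℕ) (α : ℝ) {ε s : ℝ} (hε : 0 < ε) (hs : 0 ≤ s)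
    (y : Esp d) :
    (ε * s) ^ (α - 1) * phiEvol d ε (ε * s) (√ε • y) ^ 2 =
      ε ^ (α - 1 - d) * (4 * π) ^ (-(d : ℝ)) * heatProfile d α y s := by
  have hε_pow : (ε ^ (-(d : ℝ) / 2)) ^ 2 = ε ^ (-(d : ℝ)) := by
    rw [← Real.rpow_mul_natCast hε.le]; push_cast; ring_nf
  unfold phiEvol heatProfile
  rw [show ε * s + ε = ε * (1 + s) by ring, heatK_mul_smul_sqrt d hε (by positivity), mul_pow,
    hε_pow, heatK_sq d (by positivity), Real.mul_rpow hε.le hs, sub_eq_add_neg (α - 1),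
    Real.rpow_add hε]
  ring

theorem setLIntegral_phiEvol_sq_smul_sqrt (d : ℕ) (α : ℝ) {ε : ℝ} (hε : 0 < ε) (y : Esp d) :
    ∫⁻ t in Set.Ioc (0 : ℝ) 1,
      ENNReal.ofReal (t ^ (α - 1)) * ENNReal.ofReal (phiEvol d ε t (√ε • y) ^ 2) =
      ENNReal.ofReal (ε ^ (α - d) * (4 * π) ^ (-(d : ℝ))) *
        ∫⁻ s in Set.Ioc 0 (1 / ε), ENNReal.ofReal (heatProfile d α y s) := by
  have hconst :
      ε * (ε ^ (α - 1 - d) * (4 * π) ^ (-(d : ℝ))) = ε ^ (α - d) * (4 * π) ^ (-(d : ℝ)) := by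
    rw [show α - d = 1 + (α - 1 - d) by ring, Real.rpow_add hε, Real.rpow_one, mul_assoc]
  rw [setLIntegral_Ioc_zero_eq_mul_comp_mul _ hε, ← hconst, ENNReal.ofReal_mul hε.le, mul_assoc]
  congr 1
  rw [← lintegral_const_mul' _ _ ENNReal.ofReal_ne_top]
  refine setLIntegral_congr_fun measurableSet_Ioc fun s (hs : s ∈ Set.Ioc 0 (1 / ε)) => ?_
  rw [← ENNReal.ofReal_mul (Real.rpow_nonneg (mul_pos hε hs.1).le _),
    ← ENNReal.ofReal_mul (by positivity : (0 : ℝ) ≤ ε ^ (α - 1 - d) * (4 * π) ^ (-(d : ℝ))),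
    rpow_mul_phiEvol_sq_smul_sqrt d α hε hs.1.le]

theorem measurable_heatProfile (d : ℕ) (α : ℝ) :
    Measurable (Function.uncurry (heatProfile d α)) := by
  unfold heatProfile Function.uncurry
  fun_prop

theorem heatProfile_le (d : ℕ) (α : ℝ) (y : Esp d) {B s : ℝ} (hs : s ∈ Set.Ioc 0 B) :
    heatProfile d α y s ≤ s ^ (α - 1) * Real.exp (-(2 * (1 + B))⁻¹ * ‖y‖ ^ 2) := by
  obtain ⟨hs0, hsB⟩ := hs
  have hdecay : (1 + s) ^ (-(d : ℝ)) ≤ 1 :=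
    Real.rpow_le_one_of_one_le_of_nonpos (by linarith) (by simp)
  have hwidth : -‖y‖ ^ 2 / (2 * (1 + s)) ≤ -(2 * (1 + B))⁻¹ * ‖y‖ ^ 2 := by
    rw [neg_div, neg_mul, neg_le_neg_iff, inv_mul_eq_div]
    gcongr
  calc heatProfile d α y s
      = s ^ (α - 1) * ((1 + s) ^ (-(d : ℝ)) * Real.exp (-‖y‖ ^ 2 / (2 * (1 + s)))) :=
        mul_assoc _ _ _
    _ ≤ s ^ (α - 1) * (1 * Real.exp (-(2 * (1 + B))⁻¹ * ‖y‖ ^ 2)) := by gcongr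
    _ = s ^ (α - 1) * Real.exp (-(2 * (1 + B))⁻¹ * ‖y‖ ^ 2) := by rw [one_mul]

theorem integrableOn_heatProfile (d : ℕ) {α : ℝ} (hα : 0 < α) (y : Esp d) (B : ℝ) :
    IntegrableOn (heatProfile d α y) (Set.Ioc 0 B) := by
  refine Integrable.mono' ((integrableOn_rpow_Ioc_zero (r := α - 1) (by linarith) B).mul_const
    (Real.exp (-(2 * (1 + B))⁻¹ * ‖y‖ ^ 2)))
    ((measurable_heatProfile d α).comp measurable_prodMk_left).aestronglyMeasurable ?_
  filter_upwards [ae_restrict_mem measurableSet_Ioc] with s hs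
  rw [Real.norm_of_nonneg (heatProfile_nonneg d α y hs.1.le)]
  exact heatProfile_le d α y hs

theorem setIntegral_heatProfile_le (d : ℕ) {α : ℝ} (hα : 0 < α) (y : Esp d) (B : ℝ) :
    ∫ s in Set.Ioc 0 B, heatProfile d α y s ≤
      (∫ s in Set.Ioc 0 B, s ^ (α - 1)) * Real.exp (-(2 * (1 + B))⁻¹ * ‖y‖ ^ 2) := by
  rw [← integral_mul_const]
  exact setIntegral_mono_on (integrableOn_heatProfile d hα y B)
    ((integrableOn_rpow_Ioc_zero (r := α - 1) (by linarith) B).mul_const _) measurableSet_Ioc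
    fun s hs => heatProfile_le d α y hs

theorem setIntegral_heatProfile_nonneg (d : ℕ) (α : ℝ) (y : Esp d) (B : ℝ) :
    0 ≤ ∫ s in Set.Ioc 0 B, heatProfile d α y s :=
  setIntegral_nonneg measurableSet_Ioc fun _ hs => heatProfile_nonneg d α y hs.1.le

theorem integrable_setIntegral_heatProfile_rpow (d : ℕ) {α r B : ℝ} (hα : 0 < α) (hr : 0 < r)
    (hB : 0 ≤ B) :
    Integrable (fun y : Esp d => (∫ s in Set.Ioc 0 B, heatProfile d α y s) ^ r) := by
  set A := ∫ s in Set.Ioc 0 B, s ^ (α - 1)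
  have hA : 0 ≤ A := setIntegral_nonneg measurableSet_Ioc fun s hs => Real.rpow_nonneg hs.1.le _
  have hgauss : Integrable (fun y : Esp d => A ^ r * Real.exp (-((2 * (1 + B))⁻¹ * r) * ‖y‖ ^ 2)) :=
    (integrable_exp_neg_mul_sq_norm (by positivity)).const_mul _
  have hmeas : StronglyMeasurable (fun y : Esp d => ∫ s in Set.Ioc 0 B, heatProfile d α y s) :=
    (measurable_heatProfile d α).stronglyMeasurable.integral_prod_right
  refine hgauss.mono' (hmeas.measurable.pow_const r).aestronglyMeasurable
    (Eventually.of_forall fun y => ?_)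
  rw [Real.norm_of_nonneg (Real.rpow_nonneg (setIntegral_heatProfile_nonneg d α y B) _)]
  calc (∫ s in Set.Ioc 0 B, heatProfile d α y s) ^ r
      ≤ (A * Real.exp (-(2 * (1 + B))⁻¹ * ‖y‖ ^ 2)) ^ r := by
        gcongr
        · exact setIntegral_heatProfile_nonneg d α y B
        · exact setIntegral_heatProfile_le d hα y B
    _ = A ^ r * Real.exp (-((2 * (1 + B))⁻¹ * r) * ‖y‖ ^ 2) := by
        rw [Real.mul_rpow hA (Real.exp_nonneg _), ← Real.exp_mul]
        ring_nf

theorem lintegral_rpow_setLIntegral_phiEvol_sq (d : ℕ) {α p ε : ℝ} (hα : 0 < α) (hp : 0 < p)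
    (hε : 0 < ε) :
    ∫⁻ x : Esp d, (∫⁻ t in Set.Ioc (0 : ℝ) 1,
        ENNReal.ofReal (t ^ (α - 1)) * ENNReal.ofReal (phiEvol d ε t x ^ 2)) ^ (p / 2) =
      ENNReal.ofReal (√ε ^ d * (ε ^ (α - d) * (4 * π) ^ (-(d : ℝ))) ^ (p / 2) *
        ∫ y : Esp d, (∫ s in Set.Ioc 0 (1 / ε), heatProfile d α y s) ^ (p / 2)) := by
  set c := ε ^ (α - d) * (4 * π) ^ (-(d : ℝ))
  have hc : 0 ≤ c := by positivity
  set I : Esp d → ℝ := fun y => ∫ s in Set.Ioc 0 (1 / ε), heatProfile d α y s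
  have hI : ∀ y, 0 ≤ I y := fun y => setIntegral_heatProfile_nonneg d α y _
  have hinner : ∀ y : Esp d, ∫⁻ t in Set.Ioc (0 : ℝ) 1,
      ENNReal.ofReal (t ^ (α - 1)) * ENNReal.ofReal (phiEvol d ε t (√ε • y) ^ 2) =
        ENNReal.ofReal (c * I y) := fun y => by
    rw [setLIntegral_phiEvol_sq_smul_sqrt d α hε, ENNReal.ofReal_mul hc,
      ofReal_integral_eq_lintegral_ofReal (integrableOn_heatProfile d hα y _)
        ((ae_restrict_mem measurableSet_Ioc).mono fun s hs => heatProfile_nonneg d α y hs.1.le)]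
  have hintegrable : Integrable (fun y => c ^ (p / 2) * I y ^ (p / 2)) :=
    (integrable_setIntegral_heatProfile_rpow d hα (by positivity) (by positivity)).const_mul _
  rw [lintegral_eq_ofReal_pow_mul_lintegral_comp_smul volume _ (Real.sqrt_pos.2 hε),
    finrank_euclideanSpace_fin, mul_assoc, ← integral_const_mul,
    ENNReal.ofReal_mul (by positivity),
    ofReal_integral_eq_lintegral_ofReal hintegrable (Eventually.of_forall fun y =>
      mul_nonneg (Real.rpow_nonneg hc _) (Real.rpow_nonneg (hI y) _))]
  congr 1
  refine lintegral_congr fun y => ?_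
  rw [hinner, ENNReal.ofReal_rpow_of_nonneg (mul_nonneg hc (hI y)) (by positivity),
    Real.mul_rpow hc (hI y)]

theorem scrWNorm_heat_kernel_eq_general
    (d : ℕ) (p α ε : ℝ) (hp : 1 < p) (hα : 0 < α) (hε : 0 < ε) :
    scrWNorm d α p (phiEvol d ε) =
      ENNReal.ofReal (ε ^ ((α - (d : ℝ) / (p / (p - 1))) / 2) * (4 * π) ^ (-(d : ℝ) / 2) *
        (∫ y : Esp d, (∫ s in Set.Ioc (0 : ℝ) (1 / ε),
            s ^ (α - 1) * (1 + s) ^ (-(d : ℝ)) *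
              Real.exp (-‖y‖ ^ 2 / (2 * (1 + s)))) ^ (p / 2)) ^ (1 / p)) := by
  have hp0 : 0 < p := by linarith
  have hJ : 0 ≤ ∫ y : Esp d, (∫ s in Set.Ioc 0 (1 / ε), heatProfile d α y s) ^ (p / 2) :=
    integral_nonneg fun y => Real.rpow_nonneg (setIntegral_heatProfile_nonneg d α y _) _
  have hsqrt : (√ε ^ d) ^ (1 / p) = ε ^ ((d : ℝ) / p / 2) := by
    rw [Real.sqrt_eq_rpow, ← Real.rpow_natCast, ← Real.rpow_mul hε.le, ← Real.rpow_mul hε.le]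
    ring_nf
  have hconst : ((ε ^ (α - d) * (4 * π) ^ (-(d : ℝ))) ^ (p / 2)) ^ (1 / p) =
      ε ^ ((α - d) / 2) * (4 * π) ^ (-(d : ℝ) / 2) := by
    rw [← Real.rpow_mul (by positivity), Real.mul_rpow (by positivity) (by positivity),
      ← Real.rpow_mul hε.le, ← Real.rpow_mul (by positivity)]
    congr 2 <;> field_simp
  have hexponent : (d : ℝ) / p / 2 + (α - d) / 2 = (α - d / (p / (p - 1))) / 2 := by
    field_simp
    ring
  unfold scrWNorm
  rw [lintegral_rpow_setLIntegral_phiEvol_sq d hα hp0 hε,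
    ENNReal.ofReal_rpow_of_nonneg (by positivity) (by positivity)]
  congr 1
  rw [Real.mul_rpow (by positivity) hJ, Real.mul_rpow (by positivity) (by positivity), hsqrt,
    hconst, ← mul_assoc, ← Real.rpow_add hε, hexponent]
  rfl

/-- Exact formula for `‖Φ_ε‖_{𝒮𝒲^{-α,p}}`. -/
theorem scrWNorm_heat_kernel_eq
    (d : ℕ) (hd : 1 ≤ d) (p α ε : ℝ) (hp : 1 < p) (hα : 0 < α) (hε : 0 < ε) :
    scrWNorm d α p (phiEvol d ε) =
      ENNReal.ofReal (ε ^ ((α - (d : ℝ) / (p / (p - 1))) / 2) * (4 * π) ^ (-(d : ℝ) / 2) *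
        (∫ y : Esp d, (∫ s in Set.Ioc (0 : ℝ) (1 / ε),
            s ^ (α - 1) * (1 + s) ^ (-(d : ℝ)) *
              Real.exp (-‖y‖ ^ 2 / (2 * (1 + s)))) ^ (p / 2)) ^ (1 / p)) :=
  scrWNorm_heat_kernel_eq_general d p α ε hp hα hε

end
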